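/- Every punctured plane contained in the set S₂ of singular 2×2 real matrices is either a nontrivial L-class or a nontrivial R-class of S₂: if P is a 2-dimensional linear subspace of M₂(ℝ) with every element of P singular, then all nonzero elements of P share a common range or share a common null space. -/

import Mathlib

/-!
A nonzero singular `2 × 2` matrix has rank one, so it is `vecMulVec c r` with `c, r ≠ 0`; as a map
`v ↦ v ᵥ* x = (v ⬝ᵥ c) • r` its range is the line through `r` and its kernel is `c`'s annihilator.
Writing `vecMulVec c r + vecMulVec c' r'` as the product of the transpose of the matrix with rows
`c, c'` and the matrix with rows `r, r'`, its determinant factors, so if the sum is singular then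
`c ∥ c'` (equal kernels) or `r ∥ r'` (equal ranges). In a subspace of singular matrices this holds for
every pair of nonzero elements, and a pair with different ranges forces every kernel to equal theirs.
-/

open Matrix

theorem vecMulVec_add_vecMulVec {R m n : Type*} [NonUnitalNonAssocSemiring R]
    (c c' : m → R) (r r' : n → R) :
    vecMulVec c r + vecMulVec c' r' = (of ![c, c'])ᵀ * of ![r, r'] := by
  ext i j
  simp [vecMulVec_apply, mul_apply, Fin.sum_univ_two]

theorem det_vecMulVec_add_vecMulVec {R : Type*} [CommRing R] (c c' r r' : Fin 2 → R) :
    (vecMulVec c r + vecMulVec c' r').det = (of ![c, c']).det * (of ![r, r']).det := by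
  rw [vecMulVec_add_vecMulVec, det_mul, det_transpose]

section Field

variable {K : Type*} [Field K]

theorem exists_smul_eq_of_det_eq_zero {u v : Fin 2 → K} (hu : u ≠ 0)
    (h : (of ![u, v]).det = 0) : ∃ t : K, t • u = v := by
  have hdep : ¬ LinearIndependent K (of ![u, v]).row := by
    rw [linearIndependent_rows_iff_isUnit, isUnit_iff_isUnit_det, h]
    exact not_isUnit_zero
  simpa [LinearIndependent.pair_iff' hu] using hdep

theorem exists_eq_vecMulVec_of_det_eq_zero {x : Matrix (Fin 2) (Fin 2) K} (hx : x ≠ 0)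
    (hdet : x.det = 0) : ∃ c r : Fin 2 → K, c ≠ 0 ∧ r ≠ 0 ∧ x = vecMulVec c r := by
  have hrows : x = of ![x 0, x 1] := by ext i j; fin_cases i <;> rfl
  by_cases h0 : x 0 = 0
  · refine ⟨![0, 1], x 1, by simp, fun h1 => hx ?_, ?_⟩
    · rw [hrows, h0, h1]
      ext i j; fin_cases i <;> rfl
    · ext i j; fin_cases i <;> simp [vecMulVec_apply, h0]
  · obtain ⟨t, ht⟩ := exists_smul_eq_of_det_eq_zero h0 (hrows ▸ hdet)
    refine ⟨![1, t], x 0, by simp, h0, ?_⟩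
    ext i j; fin_cases i <;> simp [vecMulVec_apply, ← ht]

variable {m : Type*} [Fintype m]

theorem range_vecMulLinear_vecMulVec [DecidableEq m] {c : m → K} (hc : c ≠ 0) (r : m → K) :
    LinearMap.range (vecMulVec c r).vecMulLinear = K ∙ r := by
  obtain ⟨i, hi⟩ := Function.ne_iff.mp hc
  ext w
  simp only [LinearMap.mem_range, vecMulLinear_apply, vecMul_vecMulVec,
    Submodule.mem_span_singleton]
  refine ⟨fun ⟨v, hv⟩ => ⟨_, hv⟩, fun ⟨a, ha⟩ => ⟨Pi.single i (a / c i), ?_⟩⟩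
  rw [single_dotProduct, div_mul_cancel₀ _ hi, ha]

theorem mem_ker_vecMulLinear_vecMulVec (c : m → K) {r : m → K} (hr : r ≠ 0) (v : m → K) :
    v ∈ LinearMap.ker (vecMulVec c r).vecMulLinear ↔ v ⬝ᵥ c = 0 := by
  simp [vecMul_vecMulVec, hr]

theorem range_eq_or_ker_eq_of_det_add_eq_zero {a b : Matrix (Fin 2) (Fin 2) K} (ha : a ≠ 0)
    (hb : b ≠ 0) (hda : a.det = 0) (hdb : b.det = 0) (hdab : (a + b).det = 0) :
    LinearMap.range a.vecMulLinear = LinearMap.range b.vecMulLinear ∨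
      LinearMap.ker a.vecMulLinear = LinearMap.ker b.vecMulLinear := by
  obtain ⟨c, r, hc, hr, rfl⟩ := exists_eq_vecMulVec_of_det_eq_zero ha hda
  obtain ⟨c', r', hc', hr', rfl⟩ := exists_eq_vecMulVec_of_det_eq_zero hb hdb
  rw [det_vecMulVec_add_vecMulVec, mul_eq_zero] at hdab
  rcases hdab with hcols | hrows
  · obtain ⟨t, rfl⟩ := exists_smul_eq_of_det_eq_zero hc hcols
    right
    ext v
    rw [smul_vecMulVec, ← vecMulVec_smul, mem_ker_vecMulLinear_vecMulVec c hr,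
      mem_ker_vecMulLinear_vecMulVec c (smul_ne_zero (left_ne_zero_of_smul hc') hr')]
  · obtain ⟨t, rfl⟩ := exists_smul_eq_of_det_eq_zero hr hrows
    left
    rw [vecMulVec_smul, ← smul_vecMulVec, range_vecMulLinear_vecMulVec hc,
      range_vecMulLinear_vecMulVec (smul_ne_zero (left_ne_zero_of_smul hr') hc')]

end Field

theorem forall_eq_or_forall_eq_of_forall_eq_or_eq {α β γ : Type*} {S : Set α} {f : α → β}
    {g : α → γ} (h : ∀ x ∈ S, ∀ y ∈ S, f x = f y ∨ g x = g y) :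
    (∀ x ∈ S, ∀ y ∈ S, f x = f y) ∨ ∀ x ∈ S, ∀ y ∈ S, g x = g y := by
  refine or_iff_not_imp_left.mpr fun hf => ?_
  push Not at hf
  obtain ⟨a, ha, b, hb, hfab⟩ := hf
  have hg : ∀ z ∈ S, g z = g a := fun z hz => by
    rcases h z hz a ha with hfza | hgza
    · rcases h z hz b hb with hfzb | hgzb
      · exact absurd (hfza.symm.trans hfzb) hfab
      · exact hgzb.trans ((h a ha b hb).resolve_left hfab).symm
    · exact hgza
  intro x hx y hy
  rw [hg x hx, hg y hy]

theorem punctured_plane_is_L_or_R_class_general (P : Submodule ℝ (Matrix (Fin 2) (Fin 2) ℝ))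
    (hsing : ∀ x ∈ P, x.det = 0) :
    (∀ x ∈ P, x ≠ 0 → ∀ y ∈ P, y ≠ 0 →
        LinearMap.range x.vecMulLinear = LinearMap.range y.vecMulLinear) ∨
    (∀ x ∈ P, x ≠ 0 → ∀ y ∈ P, y ≠ 0 →
        LinearMap.ker x.vecMulLinear = LinearMap.ker y.vecMulLinear) := by
  have h := forall_eq_or_forall_eq_of_forall_eq_or_eq (S := (P : Set _) \ {0})
    (f := fun x => LinearMap.range x.vecMulLinear) (g := fun x => LinearMap.ker x.vecMulLinear)
    fun x ⟨hx, hx0⟩ y ⟨hy, hy0⟩ => range_eq_or_ker_eq_of_det_add_eq_zero hx0 hy0 (hsing x hx)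
      (hsing y hy) (hsing _ (P.add_mem hx hy))
  simpa only [Set.mem_sdiff, SetLike.mem_coe, Set.mem_singleton_iff, and_imp] using h

theorem punctured_plane_is_L_or_R_class (P : Submodule ℝ (Matrix (Fin 2) (Fin 2) ℝ))
    (hdim : Module.finrank ℝ P = 2) (hsing : ∀ x ∈ P, x.det = 0) :
    (∀ x ∈ P, x ≠ 0 → ∀ y ∈ P, y ≠ 0 →
        LinearMap.range x.vecMulLinear = LinearMap.range y.vecMulLinear) ∨
    (∀ x ∈ P, x ≠ 0 → ∀ y ∈ P, y ≠ 0 →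
        LinearMap.ker x.vecMulLinear = LinearMap.ker y.vecMulLinear) :=
  punctured_plane_is_L_or_R_class_general P hsing
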